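/- arXiv:2006.09600 — 2 statements merged into one kernel-verified Lean document; each statement's English description precedes it below -/
import Mathlib

section
/- For two Hermitian matrices A, B and a density matrix ρ: I_ρ(A) + I_ρ(B) ≥ (1/2) I_ρ(A+B) + (1/4) I_ρ(A−B) ≥ (1/2) I_ρ(A+B). -/
open Matrix Finset
open scoped ComplexOrder

/-- The positive semidefinite square root (definition of the older Mathlib, since removed). -/
noncomputable def Matrix.PosSemidef.sqrt {n : Type*} [Fintype n] [DecidableEq n] {A : Matrix n n ℂ}
    (hA : A.PosSemidef) : Matrix n n ℂ :=
  hA.1.eigenvectorUnitary.1 * diagonal ((↑) ∘ (√·) ∘ hA.1.eigenvalues) *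
    (star hA.1.eigenvectorUnitary : Matrix n n ℂ)

/-- Wigner–Yanase skew information `I_ρ(H) = (1/2)‖[√ρ, H]‖²` (Frobenius norm). -/
noncomputable def skewInfoR {d : ℕ} {ρ : Matrix (Fin d) (Fin d) ℂ}
    (hρ : ρ.PosSemidef) (H : Matrix (Fin d) (Fin d) ℂ) : ℝ :=
  1 / 2 * ∑ i, ∑ j, ‖(hρ.sqrt * H - H * hρ.sqrt) i j‖ ^ 2

/-! The Wigner–Yanase skew information is half the squared Hilbert–Schmidt norm of the commutator
`[√ρ, H]`, which is linear in `H`. The parallelogram law for the Hilbert–Schmidt norm then gives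
`I_ρ(A + B) + I_ρ(A - B) = 2 I_ρ(A) + 2 I_ρ(B)`, and both inequalities follow from this identity
together with `I_ρ(A - B) ≥ 0`. -/

theorem Matrix.sum_sum_norm_add_sq_add_sum_sum_norm_sub_sq {m n E : Type*} [Fintype m]
    [Fintype n] [NormedAddCommGroup E] [InnerProductSpace ℝ E] (X Y : Matrix m n E) :
    ∑ i, ∑ j, ‖(X + Y) i j‖ ^ 2 + ∑ i, ∑ j, ‖(X - Y) i j‖ ^ 2 =
      2 * ∑ i, ∑ j, ‖X i j‖ ^ 2 + 2 * ∑ i, ∑ j, ‖Y i j‖ ^ 2 := by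
  simp only [mul_sum, ← sum_add_distrib, add_apply, sub_apply, sq]
  exact sum_congr rfl fun i _ ↦ sum_congr rfl fun j _ ↦ by
    linarith [parallelogram_law_with_norm ℝ (X i j) (Y i j)]

section SkewInformation

variable {d : ℕ} {ρ : Matrix (Fin d) (Fin d) ℂ} (hρ : ρ.PosSemidef)

theorem skewInfoR_nonneg (H : Matrix (Fin d) (Fin d) ℂ) : 0 ≤ skewInfoR hρ H := by
  unfold skewInfoR
  positivity

theorem skewInfoR_add_add_skewInfoR_sub (A B : Matrix (Fin d) (Fin d) ℂ) :
    skewInfoR hρ (A + B) + skewInfoR hρ (A - B) = 2 * skewInfoR hρ A + 2 * skewInfoR hρ B := by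
  have hadd : hρ.sqrt * (A + B) - (A + B) * hρ.sqrt =
      (hρ.sqrt * A - A * hρ.sqrt) + (hρ.sqrt * B - B * hρ.sqrt) := by noncomm_ring
  have hsub : hρ.sqrt * (A - B) - (A - B) * hρ.sqrt =
      (hρ.sqrt * A - A * hρ.sqrt) - (hρ.sqrt * B - B * hρ.sqrt) := by noncomm_ring
  unfold skewInfoR
  rw [hadd, hsub]
  linarith [sum_sum_norm_add_sq_add_sum_sum_norm_sub_sq
    (hρ.sqrt * A - A * hρ.sqrt) (hρ.sqrt * B - B * hρ.sqrt)]

end SkewInformation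

theorem skewInfo_two_obs_uncertainty_general {d : ℕ} (ρ A B : Matrix (Fin d) (Fin d) ℂ)
    (hρ : ρ.PosSemidef) :
    skewInfoR hρ A + skewInfoR hρ B ≥
        (1 / 2) * skewInfoR hρ (A + B) + (1 / 4) * skewInfoR hρ (A - B) ∧
      (1 / 2) * skewInfoR hρ (A + B) + (1 / 4) * skewInfoR hρ (A - B) ≥
        (1 / 2) * skewInfoR hρ (A + B) := by
  have hpar := skewInfoR_add_add_skewInfoR_sub hρ A B
  have hsub := skewInfoR_nonneg hρ (A - B)
  constructor <;> linarith

theorem skewInfo_two_obs_uncertainty {d : ℕ} (ρ A B : Matrix (Fin d) (Fin d) ℂ)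
    (hρ : ρ.PosSemidef) (hτ : ρ.trace = 1)
    (hA : A.IsHermitian) (hB : B.IsHermitian) :
    skewInfoR hρ A + skewInfoR hρ B ≥
        (1 / 2) * skewInfoR hρ (A + B) + (1 / 4) * skewInfoR hρ (A - B) ∧
      (1 / 2) * skewInfoR hρ (A + B) + (1 / 4) * skewInfoR hρ (A - B) ≥
        (1 / 2) * skewInfoR hρ (A + B) :=
  skewInfo_two_obs_uncertainty_general ρ A B hρ
end

section
/- Let U, V be elements of a complex inner product space and let 1 < p ≤ 2, q with 1/p + 1/q = 1. Then ‖U − V‖² + ‖(1−p)U − V‖² ≤ p‖U‖² + q‖V‖² ≤ ‖U − V‖² + ‖U − (1−q)V‖² (Bohr's inequality). -/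
/-!
Viewing `H` as a real inner product space, for conjugate exponents both gaps in Bohr's inequality
are exact multiples of squared norms: the left gap is `(q - 2) * ‖(p - 1) • U + V‖ ^ 2` and the
right one is `(p - 1) * (q - 2) * ‖U + (q - 1) • V‖ ^ 2`. Both are nonnegative since `q ≥ 2`.
-/

section

variable {F : Type*} [NormedAddCommGroup F] [InnerProductSpace ℝ F]

theorem mul_norm_sq_add_mul_norm_sq_sub_eq (U V : F) {p q : ℝ} (hpq : p * q = p + q) :
    p * ‖U‖ ^ 2 + q * ‖V‖ ^ 2 - (‖U - V‖ ^ 2 + ‖(1 - p) • U - V‖ ^ 2)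
      = (q - 2) * ‖(p - 1) • U + V‖ ^ 2 := by
  rw [norm_sub_sq_real, norm_sub_sq_real, norm_add_sq_real, norm_smul, norm_smul,
    real_inner_smul_left, real_inner_smul_left, mul_pow, mul_pow, Real.norm_eq_abs,
    Real.norm_eq_abs, sq_abs, sq_abs]
  linear_combination ((1 - p) * ‖U‖ ^ 2 - 2 * inner ℝ U V) * hpq

theorem norm_sub_sq_add_norm_sub_smul_sq_sub_eq (U V : F) {p q : ℝ} (hpq : p * q = p + q) :
    ‖U - V‖ ^ 2 + ‖U - (1 - q) • V‖ ^ 2 - (p * ‖U‖ ^ 2 + q * ‖V‖ ^ 2)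
      = (p - 1) * (q - 2) * ‖U + (q - 1) • V‖ ^ 2 := by
  rw [norm_sub_sq_real, norm_sub_sq_real, norm_add_sq_real, norm_smul, norm_smul,
    real_inner_smul_right, real_inner_smul_right, mul_pow, mul_pow, Real.norm_eq_abs,
    Real.norm_eq_abs, sq_abs, sq_abs]
  linear_combination
    (-(‖U‖ ^ 2 + (q - 1) * (q - 2) * ‖V‖ ^ 2 + 2 * (q - 2) * inner ℝ U V)) * hpq

variable {p q : ℝ} (hpq : p.HolderConjugate q) (hq : 2 ≤ q) (U V : F)
include hpq hq

theorem norm_sub_sq_add_norm_smul_sub_sq_le :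
    ‖U - V‖ ^ 2 + ‖(1 - p) • U - V‖ ^ 2 ≤ p * ‖U‖ ^ 2 + q * ‖V‖ ^ 2 := by
  have h_gap := mul_norm_sq_add_mul_norm_sq_sub_eq U V hpq.mul_eq_add
  have h_nonneg : 0 ≤ (q - 2) * ‖(p - 1) • U + V‖ ^ 2 := by
    have := sub_nonneg.2 hq
    positivity
  linarith

theorem le_norm_sub_sq_add_norm_sub_smul_sq :
    p * ‖U‖ ^ 2 + q * ‖V‖ ^ 2 ≤ ‖U - V‖ ^ 2 + ‖U - (1 - q) • V‖ ^ 2 := by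
  have h_gap := norm_sub_sq_add_norm_sub_smul_sq_sub_eq U V hpq.mul_eq_add
  have h_nonneg : 0 ≤ (p - 1) * (q - 2) * ‖U + (q - 1) • V‖ ^ 2 := by
    have := hpq.sub_one_pos.le
    have := sub_nonneg.2 hq
    positivity
  linarith

end

theorem Real.HolderConjugate.two_le_of_le_two {p q : ℝ} (hpq : p.HolderConjugate q)
    (hp : p ≤ 2) : 2 ≤ q := by
  have h : 0 ≤ (p - 1) * (q - 2) := by linear_combination hp - hpq.sub_one_mul_conj
  linarith [nonneg_of_mul_nonneg_right h hpq.sub_one_pos]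

theorem bohr_inequality {H : Type*} [NormedAddCommGroup H] [InnerProductSpace ℂ H]
    (U V : H) (p q : ℝ) (hp1 : 1 < p) (hp2 : p ≤ 2) (hpq : 1 / p + 1 / q = 1) :
    ‖U - V‖ ^ 2 + ‖((1 - p : ℝ) : ℂ) • U - V‖ ^ 2 ≤ p * ‖U‖ ^ 2 + q * ‖V‖ ^ 2 ∧
      p * ‖U‖ ^ 2 + q * ‖V‖ ^ 2 ≤ ‖U - V‖ ^ 2 + ‖U - ((1 - q : ℝ) : ℂ) • V‖ ^ 2 := by
  have hconj : p.HolderConjugate q :=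
    Real.holderConjugate_iff.2 ⟨hp1, by simpa only [one_div] using hpq⟩
  have hq := hconj.two_le_of_le_two hp2
  let := InnerProductSpace.complexToReal (G := H)
  rw [Complex.coe_smul, Complex.coe_smul]
  exact ⟨norm_sub_sq_add_norm_smul_sub_sq_le hconj hq U V,
    le_norm_sub_sq_add_norm_sub_smul_sq hconj hq U V⟩
end
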